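/- Let (H,R) be a cotriangular Hopf algebra and p ∈ H a primitive element. Then the set I_p := {α ∈ H⁺ : R(α, p) = 0} is a two-sided ideal of H, and it coincides with {α ∈ H⁺ : R(p, α) = 0}. -/

import Mathlib

open TensorProduct

noncomputable section

/-- Convolution product of two `ℂ`-valued functionals on a `ℂ`-coalgebra. -/
def conv {C : Type} [AddCommGroup C] [Module ℂ C] [Coalgebra ℂ C]
    (f g : C →ₗ[ℂ] ℂ) : C →ₗ[ℂ] ℂ :=
  LinearMap.mul' ℂ ℂ ∘ₗ TensorProduct.map f g ∘ₗ Coalgebra.comul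

variable {H : Type} [Ring H] [HopfAlgebra ℂ H]

/-- `ℓ ⊗ g ↦ ε(ℓ) g`. -/
def dropLeft : H ⊗[ℂ] H →ₗ[ℂ] H :=
  (TensorProduct.lid ℂ H).toLinearMap ∘ₗ TensorProduct.map Coalgebra.counit LinearMap.id

/-- `ℓ ⊗ g ↦ ε(g) ℓ`. -/
def dropRight : H ⊗[ℂ] H →ₗ[ℂ] H :=
  (TensorProduct.rid ℂ H).toLinearMap ∘ₗ TensorProduct.map LinearMap.id Coalgebra.counit

/-- An R-form making `H` coquasitriangular: `R` is convolution invertible,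
`R(h, ℓg) = Σ R(h₁,g) R(h₂,ℓ)`, `R(gh, ℓ) = Σ R(g,ℓ₁) R(h,ℓ₂)`, and
`Σ R(h₁,g₁) h₂g₂ = Σ g₁h₁ R(h₂,g₂)`. -/
structure IsRForm (Rf : H ⊗[ℂ] H →ₗ[ℂ] ℂ) : Prop where
  invertible : ∃ Rf' : H ⊗[ℂ] H →ₗ[ℂ] ℂ,
    conv Rf Rf' = Coalgebra.counit ∧ conv Rf' Rf = Coalgebra.counit
  mul_right : Rf ∘ₗ TensorProduct.map LinearMap.id (LinearMap.mul' ℂ H) =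
    conv (Rf ∘ₗ TensorProduct.map LinearMap.id dropLeft)
      (Rf ∘ₗ TensorProduct.map LinearMap.id dropRight)
  mul_left : Rf ∘ₗ TensorProduct.map (LinearMap.mul' ℂ H) LinearMap.id =
    conv (Rf ∘ₗ TensorProduct.map dropRight LinearMap.id)
      (Rf ∘ₗ TensorProduct.map dropLeft LinearMap.id)
  comm_rel : (TensorProduct.lid ℂ H).toLinearMap
        ∘ₗ TensorProduct.map Rf (LinearMap.mul' ℂ H) ∘ₗ Coalgebra.comul =
      (TensorProduct.rid ℂ H).toLinearMap
        ∘ₗ TensorProduct.map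
            (LinearMap.mul' ℂ H ∘ₗ (TensorProduct.comm ℂ H H).toLinearMap) Rf
        ∘ₗ Coalgebra.comul

/-- A cotriangular structure on `H`: an R-form with additionally
`Σ R(h₁,g₁) R(g₂,h₂) = ε(g) ε(h)`, i.e. `R⁻¹ = R₂₁`. -/
structure IsCotriangular (Rf : H ⊗[ℂ] H →ₗ[ℂ] ℂ) extends IsRForm Rf : Prop where
  symm : conv Rf (Rf ∘ₗ (TensorProduct.comm ℂ H H).toLinearMap) = Coalgebra.counit

/-!
Slicing the R-form in one argument turns its axioms into identities in the convolution
algebra of `H`. Multiplicativity makes `R(-,1)` a convolution idempotent, and it has a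
convolution right inverse, so `R(-,1) = ε`; likewise `R(1,-) = ε`. For primitive `p`,
`Δp = p ⊗ 1 + 1 ⊗ p` then makes `R(-,p)` an `ε`-derivation,
`R(hα, p) = R(h,p) ε(α) + ε(h) R(α,p)`, so `I_p` is a two-sided ideal, and cotriangularity
evaluated at `x ⊗ p` gives `R(x,p) + R(p,x) = ε(x) ε(p) = 0`.
-/

open Coalgebra WithConv

def IsPrimitiveElem (R : Type*) {A : Type*} [CommSemiring R] [AddCommMonoid A] [Module R A]
    [CoalgebraStruct R A] [One A] (p : A) : Prop :=
  comul (R := R) p = p ⊗ₜ[R] (1 : A) + (1 : A) ⊗ₜ[R] p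

def IsPrimitiveElem.repr {R A : Type*} [CommSemiring R] [AddCommMonoid A] [Module R A]
    [CoalgebraStruct R A] [One A] {p : A} (hp : IsPrimitiveElem R p) : Repr R p Bool :=
  ⟨Finset.univ, fun b => cond b p 1, fun b => cond b 1 p, by simp [hp.symm]⟩

def IsGroupLikeElem.repr {R A : Type*} [CommSemiring R] [AddCommMonoid A] [Module R A]
    [Coalgebra R A] {g : A} (hg : IsGroupLikeElem R g) : Repr R g Unit :=
  ⟨{()}, fun _ => g, fun _ => g, by simp [hg.comul_eq_tmul_self]⟩

section Convolution

variable {C D : Type} [AddCommGroup C] [Module ℂ C] [Coalgebra ℂ C]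
  [AddCommGroup D] [Module ℂ D] [Coalgebra ℂ D]

lemma conv_apply_of_repr (f g : C →ₗ[ℂ] ℂ) {c : C} {ι : Type} (r : Repr ℂ c ι) :
    conv f g c = ∑ i ∈ r.index, f (r.left i) * g (r.right i) :=
  r.convMul_apply (toConv f) (toConv g)

lemma conv_counit (f : C →ₗ[ℂ] ℂ) : conv f counit = f :=
  congrArg ofConv (mul_one (toConv f))

lemma counit_conv (f : C →ₗ[ℂ] ℂ) : conv counit f = f :=
  congrArg ofConv (one_mul (toConv f))

lemma eq_counit_of_conv_self {f g : C →ₗ[ℂ] ℂ} (hff : conv f f = f)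
    (hfg : conv f g = counit) : f = counit := by
  have hfg' : toConv f * toConv g = 1 := ofConv_injective hfg
  calc f = (toConv f * (toConv f * toConv g)).ofConv := by rw [hfg', mul_one]
    _ = (toConv f * toConv g).ofConv := by rw [← mul_assoc]; exact congrArg (conv · g) hff
    _ = counit := hfg

lemma conv_apply_tmul_right_of_repr (F G : C ⊗[ℂ] D →ₗ[ℂ] ℂ) (c : C) {d : D} {ι : Type}
    (r : Repr ℂ d ι) :
    conv F G (c ⊗ₜ d) = ∑ j ∈ r.index,
      conv ((curry F).flip (r.left j)) ((curry G).flip (r.right j)) c := by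
  simp only [conv, LinearMap.comp_apply, TensorProduct.comul_tmul, ← (ℛ ℂ c).eq, ← r.eq,
    sum_tmul, tmul_sum, map_sum, AlgebraTensorModule.tensorTensorTensorComm_tmul, map_tmul,
    LinearMap.mul'_apply, LinearMap.flip_apply, curry_apply]

lemma conv_apply_tmul_left_of_repr (F G : D ⊗[ℂ] C →ₗ[ℂ] ℂ) (c : C) {d : D} {ι : Type}
    (r : Repr ℂ d ι) :
    conv F G (d ⊗ₜ c) = ∑ j ∈ r.index,
      conv (curry F (r.left j)) (curry G (r.right j)) c := by
  simp only [conv, LinearMap.comp_apply, TensorProduct.comul_tmul, ← (ℛ ℂ c).eq, ← r.eq,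
    sum_tmul, tmul_sum, map_sum, AlgebraTensorModule.tensorTensorTensorComm_tmul, map_tmul,
    LinearMap.mul'_apply, curry_apply]
  exact Finset.sum_comm

lemma conv_mul'_map (f f' : C →ₗ[ℂ] ℂ) (g g' : D →ₗ[ℂ] ℂ) :
    conv (LinearMap.mul' ℂ ℂ ∘ₗ TensorProduct.map f g)
        (LinearMap.mul' ℂ ℂ ∘ₗ TensorProduct.map f' g') =
      LinearMap.mul' ℂ ℂ ∘ₗ TensorProduct.map (conv f f') (conv g g') := by
  ext c d
  simp only [conv, LinearMap.comp_apply, TensorProduct.comul_tmul, ← (ℛ ℂ c).eq, ← (ℛ ℂ d).eq,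
    sum_tmul, tmul_sum, map_sum, AlgebraTensorModule.tensorTensorTensorComm_tmul, map_tmul,
    LinearMap.mul'_apply, AlgebraTensorModule.curry_apply, curry_apply,
    LinearMap.coe_restrictScalars]
  exact Finset.sum_congr rfl fun _ _ => Finset.sum_congr rfl fun _ _ => mul_mul_mul_comm ..

lemma conv_apply_tmul_right_of_isGroupLikeElem (F G : C ⊗[ℂ] D →ₗ[ℂ] ℂ) (c : C) {g : D}
    (hg : IsGroupLikeElem ℂ g) :
    conv F G (c ⊗ₜ g) = conv ((curry F).flip g) ((curry G).flip g) c := by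
  simpa [IsGroupLikeElem.repr] using conv_apply_tmul_right_of_repr F G c hg.repr

lemma conv_apply_tmul_left_of_isGroupLikeElem (F G : D ⊗[ℂ] C →ₗ[ℂ] ℂ) (c : C) {g : D}
    (hg : IsGroupLikeElem ℂ g) :
    conv F G (g ⊗ₜ c) = conv (curry F g) (curry G g) c := by
  simpa [IsGroupLikeElem.repr] using conv_apply_tmul_left_of_repr F G c hg.repr

lemma conv_apply_tmul_right_of_isPrimitiveElem [One D] (F G : C ⊗[ℂ] D →ₗ[ℂ] ℂ) (c : C) {p : D}
    (hp : IsPrimitiveElem ℂ p) :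
    conv F G (c ⊗ₜ p) = conv ((curry F).flip p) ((curry G).flip 1) c +
      conv ((curry F).flip 1) ((curry G).flip p) c := by
  simpa [IsPrimitiveElem.repr] using conv_apply_tmul_right_of_repr F G c hp.repr

end Convolution

lemma IsPrimitiveElem.counit_eq_zero {A : Type} [Ring A] [Bialgebra ℂ A] {p : A}
    (hp : IsPrimitiveElem ℂ p) : counit (R := ℂ) p = 0 := by
  have h := LinearMap.congr_fun (counit_conv (counit (R := ℂ) (A := A))) p
  simpa [conv_apply_of_repr _ _ hp.repr, IsPrimitiveElem.repr] using h.symm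

section RForm

variable {Rf : H ⊗[ℂ] H →ₗ[ℂ] ℂ}

@[simp] lemma dropLeft_tmul (x y : H) : dropLeft (x ⊗ₜ[ℂ] y) = counit (R := ℂ) x • y := by
  simp [dropLeft]

@[simp] lemma dropRight_tmul (x y : H) : dropRight (x ⊗ₜ[ℂ] y) = counit (R := ℂ) y • x := by
  simp [dropRight]

lemma isGroupLikeElem_one_tmul_one : IsGroupLikeElem ℂ ((1 : H) ⊗ₜ[ℂ] (1 : H)) :=
  Algebra.TensorProduct.one_def (R := ℂ) (A := H) (B := H) ▸ IsGroupLikeElem.one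

namespace IsRForm

lemma apply_tmul_one (hR : IsRForm Rf) (x : H) : Rf (x ⊗ₜ 1) = counit x := by
  obtain ⟨Rf', hinv, -⟩ := hR.invertible
  suffices (curry Rf).flip 1 = counit from LinearMap.congr_fun this x
  refine eq_counit_of_conv_self (g := (curry Rf').flip 1) ?_ ?_
  · ext h
    have := LinearMap.congr_fun hR.mul_right (h ⊗ₜ (1 ⊗ₜ 1))
    have e₁ : (curry (Rf ∘ₗ map LinearMap.id dropLeft)).flip (1 ⊗ₜ 1) = (curry Rf).flip 1 := by
      ext; simp
    have e₂ : (curry (Rf ∘ₗ map LinearMap.id dropRight)).flip (1 ⊗ₜ 1) = (curry Rf).flip 1 := by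
      ext; simp
    rw [conv_apply_tmul_right_of_isGroupLikeElem _ _ _ isGroupLikeElem_one_tmul_one, e₁, e₂] at this
    simpa using this.symm
  · ext h
    have := LinearMap.congr_fun hinv (h ⊗ₜ 1)
    rw [conv_apply_tmul_right_of_isGroupLikeElem _ _ _ IsGroupLikeElem.one] at this
    simpa using this

lemma apply_one_tmul (hR : IsRForm Rf) (x : H) : Rf (1 ⊗ₜ x) = counit x := by
  obtain ⟨Rf', hinv, -⟩ := hR.invertible
  suffices curry Rf 1 = counit from LinearMap.congr_fun this x
  refine eq_counit_of_conv_self (g := curry Rf' 1) ?_ ?_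
  · ext h
    have := LinearMap.congr_fun hR.mul_left ((1 ⊗ₜ 1) ⊗ₜ h)
    have e₁ : curry (Rf ∘ₗ map dropRight LinearMap.id) (1 ⊗ₜ 1) = curry Rf 1 := by
      ext; simp
    have e₂ : curry (Rf ∘ₗ map dropLeft LinearMap.id) (1 ⊗ₜ 1) = curry Rf 1 := by
      ext; simp
    rw [conv_apply_tmul_left_of_isGroupLikeElem _ _ _ isGroupLikeElem_one_tmul_one, e₁, e₂] at this
    simpa using this.symm
  · ext h
    have := LinearMap.congr_fun hinv (1 ⊗ₜ h)
    rw [conv_apply_tmul_left_of_isGroupLikeElem _ _ _ IsGroupLikeElem.one] at this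
    simpa using this

lemma apply_mul_tmul_of_isPrimitiveElem (hR : IsRForm Rf) {p : H} (hp : IsPrimitiveElem ℂ p)
    (h α : H) :
    Rf ((h * α) ⊗ₜ p) = Rf (h ⊗ₜ p) * counit α + counit h * Rf (α ⊗ₜ p) := by
  have hRp : (curry (Rf ∘ₗ map dropRight LinearMap.id)).flip p =
      LinearMap.mul' ℂ ℂ ∘ₗ map ((curry Rf).flip p) counit := by
    ext; simp [← smul_tmul', mul_comm]
  have hR1 : (curry (Rf ∘ₗ map dropRight LinearMap.id)).flip 1 =
      LinearMap.mul' ℂ ℂ ∘ₗ map counit counit := by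
    ext; simp [hR.apply_tmul_one, mul_comm]
  have hLp : (curry (Rf ∘ₗ map dropLeft LinearMap.id)).flip p =
      LinearMap.mul' ℂ ℂ ∘ₗ map counit ((curry Rf).flip p) := by
    ext; simp [← smul_tmul']
  have hL1 : (curry (Rf ∘ₗ map dropLeft LinearMap.id)).flip 1 =
      LinearMap.mul' ℂ ℂ ∘ₗ map counit counit := by
    ext; simp [hR.apply_tmul_one]
  have := LinearMap.congr_fun hR.mul_left ((h ⊗ₜ α) ⊗ₜ p)
  rw [conv_apply_tmul_right_of_isPrimitiveElem _ _ _ hp, hRp, hR1, hLp, hL1, conv_mul'_map,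
    conv_mul'_map] at this
  simpa [conv_counit, counit_conv] using this

end IsRForm

lemma IsCotriangular.apply_primitive_tmul_eq_neg (hR : IsCotriangular Rf) {p : H}
    (hp : IsPrimitiveElem ℂ p) (x : H) : Rf (p ⊗ₜ x) = -Rf (x ⊗ₜ p) := by
  have := LinearMap.congr_fun hR.symm (x ⊗ₜ p)
  have h1 : (curry Rf).flip 1 = counit := LinearMap.ext hR.apply_tmul_one
  have h1' : (curry (Rf ∘ₗ (TensorProduct.comm ℂ H H).toLinearMap)).flip 1 = counit :=
    LinearMap.ext hR.apply_one_tmul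
  have hp' : (curry (Rf ∘ₗ (TensorProduct.comm ℂ H H).toLinearMap)).flip p = curry Rf p := by
    ext; simp
  rw [conv_apply_tmul_right_of_isPrimitiveElem _ _ _ hp, h1, h1', hp', conv_counit,
    counit_conv] at this
  simp only [LinearMap.flip_apply, curry_apply, counit_tmul, hp.counit_eq_zero, smul_eq_mul,
    zero_mul] at this
  linear_combination this

end RForm

theorem Ip_two_sided_ideal (Rf : H ⊗[ℂ] H →ₗ[ℂ] ℂ) (hR : IsCotriangular Rf)
    (p : H) (hp : Coalgebra.comul (R := ℂ) p = p ⊗ₜ[ℂ] (1 : H) + (1 : H) ⊗ₜ[ℂ] p) :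
    let Ip : Set H := {α : H | Coalgebra.counit α = (0 : ℂ) ∧ Rf (α ⊗ₜ[ℂ] p) = 0}
    (0 : H) ∈ Ip
    ∧ (∀ α β : H, α ∈ Ip → β ∈ Ip → α + β ∈ Ip)
    ∧ (∀ (c : ℂ) (α : H), α ∈ Ip → c • α ∈ Ip)
    ∧ (∀ α ∈ Ip, ∀ h : H, h * α ∈ Ip ∧ α * h ∈ Ip)
    ∧ Ip = {α : H | Coalgebra.counit α = (0 : ℂ) ∧ Rf (p ⊗ₜ[ℂ] α) = 0} := by
  intro Ip
  have hmul := hR.apply_mul_tmul_of_isPrimitiveElem hp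
  refine ⟨by simp [Ip], ?_, ?_, ?_, ?_⟩
  · rintro α β ⟨hα, hα'⟩ ⟨hβ, hβ'⟩
    exact ⟨by simp [hα, hβ], by simp [add_tmul, hα', hβ']⟩
  · rintro c α ⟨hα, hα'⟩
    exact ⟨by simp [hα], by simp [← smul_tmul', hα']⟩
  · rintro α ⟨hα, hα'⟩ h
    exact ⟨⟨by simp [hα], by simp [hmul, hα, hα']⟩, ⟨by simp [hα], by simp [hmul, hα, hα']⟩⟩
  · ext α
    simp only [Ip, Set.mem_ofPred_eq, hR.apply_primitive_tmul_eq_neg hp, neg_eq_zero]
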